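/- Let a ∈ F_q^*, let t be a positive integer such that X^t − a is irreducible over F_q, and let n be a positive integer with rad(n) ∣ ord(a). Assume 4 ∤ tn or q ≡ 1 (mod 4), and set d := gcd(n, (q−1)/ord(a)). Then there exists b ∈ F_q with b^d = a such that the factorization of X^{tn} − a into monic irreducible factors over F_q is ∏_{j=0}^{d−1} (X^{t·(n/d)} − ζ_d^j b), and ord(ζ_d^j b) = ord(a) · d for all 0 ≤ j ≤ d−1. -/

import Mathlib

/-!
Let `e = ord a` and `q - 1 = e s`. As `d ∣ s`, `a = b ^ d` for some `b`, and substituting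
`X ^ (t (n / d))` into `X ^ d - b ^ d = ∏ (X - ζ ^ j b)` gives the factorization. Each
`c = ζ ^ j b` has `c ^ d = a`, so `ord c = e d` because every prime factor of `d` divides `e`.
By Capelli's criterion `X ^ m - c` is irreducible when `c` is not a `p`-th power for any prime
`p ∣ m` (and `-1` is a square if `4 ∣ m`). In the cyclic group `F_q^*` this means `p ∣ q - 1`
and `p ∤ (q - 1) / ord c = s / d`: for `p ∣ t` it is inherited from the irreducibility of
`X ^ t - a`, and for `p ∣ n / d` it holds because `n / d` and `s / d` are coprime.
-/

open Polynomial IntermediateField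

theorem norm_adjoinSimple_gen_of_minpoly_eq_X_pow_sub_C {K E : Type*} [Field K] [Field E]
    [Algebra K E] {m : ℕ} (hm : m ≠ 0) {c : K} {x : E} (hx : minpoly K x = X ^ m - C c) :
    Algebra.norm K (AdjoinSimple.gen K x) = (-1) ^ (m + 1) * c := by
  have hint : IsIntegral K x := by
    rw [← minpoly.ne_zero_iff, hx]
    exact X_pow_sub_C_ne_zero (Nat.pos_of_ne_zero hm) c
  have hdim : (adjoin.powerBasis hint).dim = m := by
    simp [adjoin.powerBasis, hx]
  rw [← adjoin.powerBasis_gen hint, Algebra.PowerBasis.norm_gen_eq_coeff_zero_minpoly,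
    adjoin.powerBasis_gen, minpoly_gen, hx, hdim]
  simp [coeff_X_pow, hm.symm]
  ring

/-- Capelli's criterion; its exceptional case `a ∈ -4 K⁴` cannot occur when `-1` is a square. -/
theorem X_pow_sub_C_irreducible_of_forall_prime {K : Type*} [Field K] {n : ℕ} (hn : n ≠ 0)
    {a : K} (ha : ∀ p : ℕ, p.Prime → p ∣ n → ∀ b : K, b ^ p ≠ a)
    (h4 : 4 ∣ n → IsSquare (-1 : K)) :
    Irreducible (X ^ n - C a) := by
  induction n using induction_on_primes generalizing K a with
  | zero => exact absurd rfl hn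
  | one => simpa using irreducible_X_sub_C a
  | prime_mul p n hp IH =>
    rw [mul_comm]
    refine X_pow_mul_sub_C_irreducible
      (X_pow_sub_C_irreducible_of_prime hp (ha p hp (dvd_mul_right _ _))) ?_
    intro E _ _ x hx
    refine IH (right_ne_zero_of_mul hn) ?_ ?_
    · -- the norm of a `q`-th root of `ᵖ√a` is a `q`-th root of `(-1) ^ (p + 1) * a`
      intro q hq hqn y hy
      have hsign : ∃ w : K, w ^ q = (-1) ^ (p + 1) := by
        rcases hp.eq_two_or_odd' with rfl | hp_odd
        · rcases hq.eq_two_or_odd' with rfl | hq_odd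
          · obtain ⟨i, hi⟩ := h4 (mul_dvd_mul_left 2 hqn)
            exact ⟨i, by rw [sq, ← hi]; norm_num⟩
          · exact ⟨-1, by rw [hq_odd.neg_one_pow]; norm_num⟩
        · exact ⟨1, by rw [one_pow, (hp_odd.add_one).neg_one_pow]⟩
      obtain ⟨w, hw⟩ := hsign
      have hnorm : (Algebra.norm K y) ^ q = (-1) ^ (p + 1) * a := by
        rw [← map_pow, hy, norm_adjoinSimple_gen_of_minpoly_eq_X_pow_sub_C hp.ne_zero hx]
      refine ha q hq (dvd_mul_of_dvd_right hqn p) (w * Algebra.norm K y) ?_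
      rw [mul_pow, hw, hnorm, ← mul_assoc, ← pow_add, ← two_mul, pow_mul, neg_one_sq, one_pow,
        one_mul]
    · intro h4n
      obtain ⟨i, hi⟩ := h4 (h4n.mul_left p)
      exact ⟨algebraMap K K⟮x⟯ i, by rw [← map_mul, ← hi, map_neg, map_one]⟩

theorem X_pow_mul_sub_C_eq_prod {R : Type*} [CommRing R] [IsDomain R] {d : ℕ} {ζ : R}
    (hζ : IsPrimitiveRoot ζ d) (hd : 0 < d) {b a : R} (hb : b ^ d = a) (m : ℕ) :
    X ^ (m * d) - C a = ∏ j ∈ Finset.range d, (X ^ m - C (ζ ^ j * b)) := by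
  have h := congrArg (fun P : R[X] ↦ P.comp (X ^ m)) (X_pow_sub_C_eq_prod hζ hd hb)
  simpa only [sub_comp, pow_comp, X_comp, C_comp, prod_comp, ← pow_mul] using h

theorem Nat.dvd_of_forall_prime_dvd_div_gcd {o d : ℕ} (hd : 0 < d)
    (h : ∀ p : ℕ, p.Prime → p ∣ d → p ∣ o / o.gcd d) : d ∣ o := by
  have hg : 0 < o.gcd d := Nat.gcd_pos_of_pos_right o hd
  suffices d / o.gcd d = 1 by
    rw [← Nat.div_mul_cancel (Nat.gcd_dvd_right o d), this, one_mul]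
    exact Nat.gcd_dvd_left o d
  by_contra hne
  obtain ⟨p, hp, hpd⟩ := Nat.exists_prime_and_dvd hne
  have hpo := h p hp (hpd.trans (Nat.div_dvd_of_dvd (Nat.gcd_dvd_right o d)))
  exact hp.one_lt.ne' (Nat.eq_one_of_dvd_coprimes (Nat.coprime_div_gcd_div_gcd hg) hpo hpd)

theorem orderOf_eq_mul_of_pow_eq {M : Type*} [Monoid M] {a b : M} {d : ℕ} (hd : 0 < d)
    (hb : b ^ d = a) (hrad : ∀ p : ℕ, p.Prime → p ∣ d → p ∣ orderOf a) :
    orderOf b = orderOf a * d := by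
  have hord : orderOf a = orderOf b / (orderOf b).gcd d := by rw [← hb, orderOf_pow' b hd.ne']
  have hdvd : d ∣ orderOf b := Nat.dvd_of_forall_prime_dvd_div_gcd hd (hord ▸ hrad)
  rw [hord, Nat.gcd_eq_right hdvd, Nat.div_mul_cancel hdvd]

theorem IsCyclic.exists_pow_eq_iff_orderOf_dvd {G : Type*} [CommGroup G] [IsCyclic G] [Finite G]
    (k : ℕ) (x : G) :
    (∃ y, y ^ k = x) ↔ orderOf x ∣ Nat.card G / (Nat.card G).gcd k := by
  set m := Nat.card G / (Nat.card G).gcd k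
  have hm : m ∣ Nat.card G := Nat.div_dvd_of_dvd (Nat.gcd_dvd_left _ _)
  have hle : (powMonoidHom k : G →* G).range ≤ (powMonoidHom m).ker := by
    rintro _ ⟨y, rfl⟩
    rw [MonoidHom.mem_ker, powMonoidHom_apply, powMonoidHom_apply, ← pow_mul,
      ← Nat.mul_div_assoc _ (Nat.gcd_dvd_left _ _), mul_comm,
      Nat.mul_div_assoc _ (Nat.gcd_dvd_right _ _), pow_mul, pow_card_eq_one', one_pow]
  have heq := Subgroup.eq_of_le_of_card_ge hle (by
    rw [IsCyclic.card_powMonoidHom_range, IsCyclic.card_powMonoidHom_ker, Nat.gcd_eq_right hm])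
  rw [orderOf_dvd_iff_pow_eq_one, ← powMonoidHom_apply, ← MonoidHom.mem_ker, ← heq]
  rfl

namespace FiniteField

variable {F : Type*} [Field F] [Fintype F]

theorem orderOf_dvd_card_sub_one {c : F} (hc : c ≠ 0) : orderOf c ∣ Fintype.card F - 1 :=
  orderOf_dvd_of_pow_eq_one (pow_card_sub_one_eq_one c hc)

theorem exists_pow_eq_iff_orderOf_dvd {k : ℕ} (hk : k ≠ 0) {c : F} (hc : c ≠ 0) :
    (∃ y, y ^ k = c) ↔ orderOf c ∣ (Fintype.card F - 1) / (Fintype.card F - 1).gcd k := by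
  rw [← Nat.card_eq_fintype_card, ← Nat.card_units, ← Units.val_mk0 hc, orderOf_units,
    ← IsCyclic.exists_pow_eq_iff_orderOf_dvd]
  constructor
  · rintro ⟨y, hy⟩
    have hy0 : y ≠ 0 := by rintro rfl; exact hc (by simpa [zero_pow hk] using hy.symm)
    exact ⟨Units.mk0 y hy0, Units.ext (by simpa using hy)⟩
  · rintro ⟨u, hu⟩
    exact ⟨u, by rw [← Units.val_pow_eq_pow_val, hu]⟩

theorem exists_pow_eq_iff_of_prime {p : ℕ} (hp : p.Prime) {c : F} (hc : c ≠ 0) :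
    (∃ y, y ^ p = c) ↔
      (p ∣ Fintype.card F - 1 → p ∣ (Fintype.card F - 1) / orderOf c) := by
  have hc_dvd := orderOf_dvd_card_sub_one hc
  rw [exists_pow_eq_iff_orderOf_dvd hp.ne_zero hc]
  by_cases hpq : p ∣ Fintype.card F - 1
  · rw [Nat.gcd_eq_right hpq, Nat.dvd_div_iff_mul_dvd hpq, Nat.dvd_div_iff_mul_dvd hc_dvd,
      mul_comm]
    exact ⟨fun h _ ↦ h, fun h ↦ h hpq⟩
  · rw [Nat.Coprime.gcd_eq_one ((hp.coprime_iff_not_dvd.mpr hpq).symm), Nat.div_one]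
    exact ⟨fun _ h ↦ absurd h hpq, fun _ ↦ hc_dvd⟩

theorem exists_pow_eq_of_dvd_card_sub_one_div {k : ℕ} (hk : k ≠ 0) {c : F} (hc : c ≠ 0)
    (hkc : k ∣ (Fintype.card F - 1) / orderOf c) : ∃ y, y ^ k = c := by
  have hc_dvd := orderOf_dvd_card_sub_one hc
  have hk_dvd : k ∣ Fintype.card F - 1 := hkc.trans (Nat.div_dvd_of_dvd hc_dvd)
  rw [exists_pow_eq_iff_orderOf_dvd hk hc, Nat.gcd_eq_right hk_dvd,
    Nat.dvd_div_iff_mul_dvd hk_dvd, ← Nat.div_mul_cancel hc_dvd]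
  exact Nat.mul_dvd_mul_right hkc _

theorem irreducible_X_pow_sub_C_of_pow_eq {a c : F} (ha : a ≠ 0) {t n d : ℕ} (hn : 0 < n)
    (hirr : Irreducible (X ^ t - C a)) (hrad : ∀ p : ℕ, p.Prime → p ∣ n → p ∣ orderOf a)
    (h4 : 4 ∣ t * n → Fintype.card F % 4 = 1)
    (hd : d = n.gcd ((Fintype.card F - 1) / orderOf a)) (hc : c ^ d = a) :
    Irreducible (X ^ (t * (n / d)) - C c) := by
  set s := (Fintype.card F - 1) / orderOf a
  have hd0 : 0 < d := hd ▸ Nat.gcd_pos_of_pos_left _ hn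
  have hdn : d ∣ n := hd ▸ Nat.gcd_dvd_left _ _
  have hds : d ∣ s := hd ▸ Nat.gcd_dvd_right _ _
  have hc0 : c ≠ 0 := by rintro rfl; exact ha (by rw [← hc, zero_pow hd0.ne'])
  have hordc : orderOf c = orderOf a * d :=
    orderOf_eq_mul_of_pow_eq hd0 hc fun p hp hpd ↦ hrad p hp (hpd.trans hdn)
  have hm : t * (n / d) ≠ 0 := mul_ne_zero (ne_zero_of_irreducible_X_pow_sub_C hirr)
    (Nat.div_ne_zero_iff_of_dvd hdn |>.mpr ⟨hn.ne', hd0.ne'⟩)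
  refine X_pow_sub_C_irreducible_of_forall_prime hm ?_ ?_
  · intro p hp hpm y hy
    suffices p ∣ Fintype.card F - 1 ∧ ¬ p ∣ s / d by
      have h := (exists_pow_eq_iff_of_prime hp hc0).mp ⟨y, hy⟩ this.1
      rw [hordc, ← Nat.div_div_eq_div_mul] at h
      exact this.2 h
    rcases hp.dvd_mul.mp hpm with hpt | hpnd
    · have hno : ¬ ∃ y, y ^ p = a := fun ⟨y, hy⟩ ↦
        pow_ne_of_irreducible_X_pow_sub_C hirr hpt hp.ne_one y hy
      rw [exists_pow_eq_iff_of_prime hp ha, Classical.not_imp] at hno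
      exact ⟨hno.1, fun h ↦ hno.2 (h.trans (Nat.div_dvd_of_dvd hds))⟩
    · refine ⟨(hrad p hp (hpnd.trans (Nat.div_dvd_of_dvd hdn))).trans
        (orderOf_dvd_card_sub_one ha), fun hps ↦ hp.one_lt.ne' ?_⟩
      have hcop := Nat.coprime_div_gcd_div_gcd (m := n) (n := s) (hd ▸ hd0)
      rw [← hd] at hcop
      exact Nat.eq_one_of_dvd_coprimes hcop hpnd hps
  · intro h4m
    refine isSquare_neg_one_iff.mpr ?_
    have h4tn : 4 ∣ t * n := by
      rw [← Nat.mul_div_cancel' hdn, mul_left_comm]; exact h4m.mul_left d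
    have := h4 h4tn
    omega

end FiniteField

theorem stmt7_general (q : ℕ) (F : Type*) [Field F] [Fintype F] (hF : Fintype.card F = q)
    (a : F) (ha : a ≠ 0)
    (t : ℕ) (hirr : Irreducible (X ^ t - C a))
    (n : ℕ) (hn : 0 < n) (hrad : (∏ p ∈ n.primeFactors, p) ∣ orderOf a)
    (h4 : ¬ 4 ∣ t * n ∨ q % 4 = 1)
    (d : ℕ) (hd : d = Nat.gcd n ((q - 1) / orderOf a))
    (ζ : F) (hζ : IsPrimitiveRoot ζ d) :
    ∃ b : F, b ^ d = a ∧
      (X ^ (t * n) - C a : Polynomial F) =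
        (∏ j ∈ Finset.range d, (X ^ (t * (n / d)) - C (ζ ^ j * b))) ∧
      ∀ j ∈ Finset.range d,
        (X ^ (t * (n / d)) - C (ζ ^ j * b)).Monic ∧
        Irreducible (X ^ (t * (n / d)) - C (ζ ^ j * b)) ∧
        orderOf (ζ ^ j * b) = orderOf a * d := by
  subst hF
  have hrad' : ∀ p : ℕ, p.Prime → p ∣ n → p ∣ orderOf a := fun p hp hpn ↦
    (Finset.dvd_prod_of_mem _ (Nat.mem_primeFactors.mpr ⟨hp, hpn, hn.ne'⟩)).trans hrad
  have hd0 : 0 < d := hd ▸ Nat.gcd_pos_of_pos_left _ hn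
  have hdn : d ∣ n := hd ▸ Nat.gcd_dvd_left _ _
  obtain ⟨b, hb⟩ :=
    FiniteField.exists_pow_eq_of_dvd_card_sub_one_div hd0.ne' ha (hd ▸ Nat.gcd_dvd_right _ _)
  have hroot : ∀ j, (ζ ^ j * b) ^ d = a := fun j ↦ by
    rw [mul_pow, ← pow_mul, mul_comm j, pow_mul, hζ.pow_eq_one, one_pow, one_mul, hb]
  refine ⟨b, hb, ?_, fun j _ ↦ ?_⟩
  · rw [← X_pow_mul_sub_C_eq_prod hζ hd0 hb, mul_assoc, Nat.div_mul_cancel hdn]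
  have hirr_j := FiniteField.irreducible_X_pow_sub_C_of_pow_eq ha hn hirr hrad'
    (fun h ↦ h4.resolve_left (not_not_intro h)) hd (hroot j)
  exact ⟨monic_X_pow_sub_C _ (ne_zero_of_irreducible_X_pow_sub_C hirr_j), hirr_j,
    orderOf_eq_mul_of_pow_eq hd0 (hroot j) fun p hp hpd ↦ hrad' p hp (hpd.trans hdn)⟩

/-- Let `a ∈ F_q^*`, `t` a positive integer such that `X ^ t - a` is
irreducible over `F_q`, and `n` a positive integer with `rad n ∣ ord a`.  Assume `4 ∤ t n`
or `q ≡ 1 (mod 4)` and set `d := gcd(n, (q - 1) / ord a)`.  Then there exists `b ∈ F_q`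
with `b ^ d = a` such that the factorization of `X ^ (t n) - a` into monic irreducible
factors over `F_q` is `∏_{j=0}^{d-1} (X ^ (t (n / d)) - ζ_d^j b)`, and
`ord (ζ_d^j b) = ord a * d` for all `0 ≤ j ≤ d - 1`. -/
theorem stmt7 (q : ℕ) (F : Type*) [Field F] [Fintype F] (hF : Fintype.card F = q)
    (a : F) (ha : a ≠ 0)
    (t : ℕ) (ht : 0 < t) (hirr : Irreducible (X ^ t - C a))
    (n : ℕ) (hn : 0 < n) (hrad : (∏ p ∈ n.primeFactors, p) ∣ orderOf a)
    (h4 : ¬ 4 ∣ t * n ∨ q % 4 = 1)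
    (d : ℕ) (hd : d = Nat.gcd n ((q - 1) / orderOf a))
    (ζ : F) (hζ : IsPrimitiveRoot ζ d) :
    ∃ b : F, b ^ d = a ∧
      (X ^ (t * n) - C a : Polynomial F) =
        (∏ j ∈ Finset.range d, (X ^ (t * (n / d)) - C (ζ ^ j * b))) ∧
      ∀ j ∈ Finset.range d,
        (X ^ (t * (n / d)) - C (ζ ^ j * b)).Monic ∧
        Irreducible (X ^ (t * (n / d)) - C (ζ ^ j * b)) ∧
        orderOf (ζ ^ j * b) = orderOf a * d :=
  stmt7_general q F hF a ha t hirr n hn hrad h4 d hd ζ hζ
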